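/- arXiv:2106.15208 — 2 statements merged into one kernel-verified Lean document; each statement's English description precedes it below -/
import Mathlib

section
/- In the setting of a finite probability space with filtration (F_t), a finitely-valued random variable G with P(G=c) > 0 and P(G=c | F_t) > 0 a.s. for all c and t ≤ T−1, define for fixed t the measure Q_t on G_t = F_t ∨ σ(G) by Q_t(A) = E[(1/q_t^G) 1_A], where q_t^G(ω) = P(G = G(ω)|F_t)(ω)/P(G = G(ω)). Then Q_t is a probability measure under which F_t and σ(G) are independent; moreover Q_t coincides with P on F_t and on σ(G), i.e. Q_t(B ∩ {G = c}) = P(B) · P(G = c) for all B ∈ F_t and c ∈ Γ. -/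
/-!
Write `p_c = P(G = c | F_t)`, so that `1 / q_t^G = P(G = c) / p_c` on `{G = c}`. Since `p_c` is
`F_t`-measurable, pulling it out of the conditional expectation gives
`E[p_c⁻¹ 1_{G = c} | F_t] = p_c⁻¹ p_c = 1`, hence `∫_{B ∩ {G = c}} p_c⁻¹ dP = P(B)` for `B ∈ F_t`,
and so `Q_t(B ∩ {G = c}) = P(B) P(G = c)`. Summing over the fibres of `G` gives `Q_t(Ω) = 1`.
-/

open MeasureTheory Set

lemma MeasureTheory.Integrable.of_finite_of_aestronglyMeasurable {Ω E : Type*} [Finite Ω]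
    [MeasurableSpace Ω] {μ : Measure Ω} [IsFiniteMeasure μ] [NormedAddCommGroup E] {f : Ω → E}
    (hf : AEStronglyMeasurable f μ) : Integrable f μ := by
  obtain ⟨C, hC⟩ := (finite_range fun ω => ‖f ω‖).bddAbove
  exact .of_bound hf C (ae_of_all _ fun ω => hC (mem_range_self ω))

lemma MeasureTheory.setIntegral_inter_inv_condExp_indicator {Ω : Type*} {m mΩ : MeasurableSpace Ω}
    {μ : Measure Ω} [IsFiniteMeasure μ] (hm : m ≤ mΩ) {S B : Set Ω} (hS : MeasurableSet S)
    (hB : MeasurableSet[m] B)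
    (hpos : ∀ᵐ ω ∂μ, 0 < μ[S.indicator (fun _ => (1 : ℝ)) | m] ω)
    (hint : Integrable ((μ[S.indicator (fun _ => (1 : ℝ)) | m])⁻¹ * S.indicator (fun _ => 1)) μ) :
    ∫ ω in B ∩ S, (μ[S.indicator (fun _ => (1 : ℝ)) | m] ω)⁻¹ ∂μ = μ.real B := by
  set p := μ[S.indicator (fun _ => (1 : ℝ)) | m]
  have hind : Integrable (S.indicator fun _ => (1 : ℝ)) μ := (integrable_const 1).indicator hS
  have hpull : μ[p⁻¹ * S.indicator (fun _ => 1) | m] =ᵐ[μ] fun _ => 1 := by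
    filter_upwards [condExp_mul_of_stronglyMeasurable_left
      stronglyMeasurable_condExp.measurable.inv.stronglyMeasurable hint hind, hpos] with ω hω hpω
    rw [hω]
    exact inv_mul_cancel₀ hpω.ne'
  calc ∫ ω in B ∩ S, (p ω)⁻¹ ∂μ
      = ∫ ω in B, (p⁻¹ * S.indicator (fun _ => (1 : ℝ))) ω ∂μ := by
        rw [← setIntegral_indicator hS]
        congr 1 with ω
        by_cases hω : ω ∈ S <;> simp [hω]
    _ = ∫ ω in B, μ[p⁻¹ * S.indicator (fun _ => 1) | m] ω ∂μ := (setIntegral_condExp hm hint hB).symm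
    _ = μ.real B := by
        rw [setIntegral_congr_ae (hm B hB) (hpull.mono fun ω hω _ => hω), setIntegral_const,
          smul_eq_mul, mul_one]

lemma MeasureTheory.integral_eq_sum_setIntegral_preimage_singleton {Ω Γ E : Type*}
    [MeasurableSpace Ω] [Fintype Γ] [MeasurableSpace Γ] [MeasurableSingletonClass Γ]
    [NormedAddCommGroup E] [NormedSpace ℝ E] {μ : Measure Ω} {G : Ω → Γ} (hG : Measurable G)
    {f : Ω → E} (hf : ∀ c, IntegrableOn f (G ⁻¹' {c}) μ) :
    ∫ ω, f ω ∂μ = ∑ c, ∫ ω in G ⁻¹' {c}, f ω ∂μ := by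
  have hdisj : Pairwise (Function.onFun Disjoint fun c => G ⁻¹' {c}) := fun c c' h =>
    disjoint_singleton.2 h |>.preimage G
  rw [← integral_iUnion_fintype (fun c => hG (measurableSet_singleton c)) hdisj hf,
    ← preimage_iUnion, iUnion_of_singleton, preimage_univ, setIntegral_univ]

theorem stmt2_general {Ω : Type*} [Fintype Ω] {mΩ : MeasurableSpace Ω}
    (μ : Measure Ω) [IsProbabilityMeasure μ]
    (T : ℕ) (ℱ : Filtration ℕ mΩ)
    {Γ : Type*} [Fintype Γ] [MeasurableSpace Γ] [MeasurableSingletonClass Γ]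
    (G : Ω → Γ) (hG : Measurable G)
    (hpos : ∀ c : Γ, ∀ s ≤ T - 1, ∀ᵐ ω ∂μ,
      0 < (μ[(G ⁻¹' {c}).indicator (fun _ => (1 : ℝ)) | ℱ s]) ω)
    (qG : ℕ → Ω → ℝ)
    (hqG : ∀ s ω, qG s ω =
      (μ[(G ⁻¹' {G ω}).indicator (fun _ => (1 : ℝ)) | ℱ s]) ω / (μ (G ⁻¹' {G ω})).toReal)
    (t : ℕ) (ht : t ≤ T - 1)
    (Qt : Set Ω → ℝ)
    (hQt : ∀ A, Qt A = ∫ ω in A, (qG t ω)⁻¹ ∂μ) :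
    Qt Set.univ = 1 ∧ (∀ A, 0 ≤ Qt A) ∧
    ∀ B, MeasurableSet[ℱ t] B → ∀ c : Γ,
      Qt (B ∩ G ⁻¹' {c}) = (μ B).toReal * (μ (G ⁻¹' {c})).toReal := by
  set p : Γ → Ω → ℝ := fun c => μ[(G ⁻¹' {c}).indicator (fun _ => (1 : ℝ)) | ℱ t]
  have hp_pos : ∀ᵐ ω ∂μ, ∀ c, 0 < p c ω := ae_all_iff.2 fun c => hpos c t ht
  have hfiber : ∀ c, MeasurableSet (G ⁻¹' {c}) := fun c => hG (measurableSet_singleton c)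
  have hp_inv_meas : ∀ c, Measurable (p c)⁻¹ := fun c =>
    (stronglyMeasurable_condExp.mono (ℱ.le t)).measurable.inv
  have hqG_inv : ∀ c, EqOn (fun ω => (qG t ω)⁻¹) (fun ω => μ.real (G ⁻¹' {c}) * (p c ω)⁻¹)
      (G ⁻¹' {c}) := by
    rintro c ω rfl
    dsimp only
    rw [hqG, inv_div, div_eq_mul_inv, measureReal_def]
  have hQt_fiber : ∀ B, MeasurableSet[ℱ t] B → ∀ c : Γ,
      Qt (B ∩ G ⁻¹' {c}) = μ.real B * μ.real (G ⁻¹' {c}) := by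
    intro B hB c
    rw [hQt, setIntegral_congr_fun ((ℱ.le t B hB).inter (hfiber c))
      fun ω hω => hqG_inv c hω.2, integral_const_mul,
      setIntegral_inter_inv_condExp_indicator (ℱ.le t) (hfiber c) hB (hpos c t ht)
        (.of_finite_of_aestronglyMeasurable
          ((hp_inv_meas c).mul (measurable_const.indicator (hfiber c))).aestronglyMeasurable),
      mul_comm]
  refine ⟨?_, fun A => ?_, hQt_fiber⟩
  · have hint : ∀ c, IntegrableOn (fun ω => (qG t ω)⁻¹) (G ⁻¹' {c}) μ := fun c =>
      (Integrable.of_finite_of_aestronglyMeasurable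
        ((hp_inv_meas c).const_mul _).aestronglyMeasurable).integrableOn.congr_fun
        (hqG_inv c).symm (hfiber c)
    calc Qt univ = ∑ c, Qt (univ ∩ G ⁻¹' {c}) := by
          simp_rw [hQt, univ_inter, setIntegral_univ]
          exact integral_eq_sum_setIntegral_preimage_singleton hG hint
      _ = ∑ c, μ.real (G ⁻¹' {c}) := by
          simp_rw [hQt_fiber univ MeasurableSet.univ, probReal_univ, one_mul]
      _ = 1 := by
          rw [sum_measureReal_preimage_singleton _ fun c _ => hfiber c]
          simp
  · rw [hQt]
    refine integral_nonneg_of_ae (ae_restrict_of_ae ?_)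
    filter_upwards [hp_pos] with ω hω
    rw [hqG]
    exact inv_nonneg.2 (div_nonneg (hω (G ω)).le ENNReal.toReal_nonneg)

/-- The measure `Q_t(A) = E[(1/q_t^G) 1_A]` is a probability measure under which
`F_t` and `σ(G)` are independent, coinciding with `P` on `F_t` and on `σ(G)`:
`Q_t(B ∩ {G = c}) = P(B) · P(G = c)`. -/
theorem stmt2 {Ω : Type*} [Fintype Ω] {mΩ : MeasurableSpace Ω}
    (μ : Measure Ω) [IsProbabilityMeasure μ]
    (T : ℕ) (hT : 1 ≤ T) (ℱ : Filtration ℕ mΩ)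
    {Γ : Type*} [Fintype Γ] [MeasurableSpace Γ] [MeasurableSingletonClass Γ]
    (G : Ω → Γ) (hG : Measurable G)
    (hposG : ∀ c : Γ, 0 < (μ (G ⁻¹' {c})).toReal)
    (hpos : ∀ c : Γ, ∀ s ≤ T - 1, ∀ᵐ ω ∂μ,
      0 < (μ[(G ⁻¹' {c}).indicator (fun _ => (1 : ℝ)) | ℱ s]) ω)
    (qG : ℕ → Ω → ℝ)
    (hqG : ∀ s ω, qG s ω =
      (μ[(G ⁻¹' {G ω}).indicator (fun _ => (1 : ℝ)) | ℱ s]) ω / (μ (G ⁻¹' {G ω})).toReal)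
    (t : ℕ) (ht : t ≤ T - 1)
    (Qt : Set Ω → ℝ)
    (hQt : ∀ A, Qt A = ∫ ω in A, (qG t ω)⁻¹ ∂μ) :
    Qt Set.univ = 1 ∧ (∀ A, 0 ≤ Qt A) ∧
    ∀ B, MeasurableSet[ℱ t] B → ∀ c : Γ,
      Qt (B ∩ G ⁻¹' {c}) = (μ B).toReal * (μ (G ⁻¹' {c})).toReal :=
  stmt2_general μ T ℱ G hG hpos qG hqG t ht Qt hQt
end

section
/- Let (Ω, 𝒜, P) be a finite probability space with filtration (F_t)_{t=0..T}, F_0 trivial, and let G be a non-constant F_T-measurable random variable taking finitely many values. Then there is no positive (P, G)-martingale (M_t)_{t=0..T} with M_0 = 1 such that for every (P, F)-martingale X, the process (X_t M_t)_{t=0..T} is a (P, G)-martingale, where G_t = F_t ∨ σ(G). (That is, the enlarged model admits no deflator on the full horizon and hence is not arbitrage-free on {0,...,T}.) -/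
/-!
Close the `ℱ`-martingale `Xₜ = E[G | ℱₜ]` at `X_T = G`. The deflator property gives
`E[G M_T | 𝒢₀] = X₀ M₀ = E[G]`, while `G` is `𝒢₀`-measurable, so pulling it out yields
`E[G M_T | 𝒢₀] = G · E[M_T | 𝒢₀] = G · M₀ = G`. Hence `G = E[G]` almost surely.
-/

open MeasureTheory

lemma MeasureTheory.StronglyMeasurable.integrable_of_finite {Ω E : Type*} [Finite Ω]
    {mΩ : MeasurableSpace Ω} [NormedAddCommGroup E] {μ : Measure Ω} [IsFiniteMeasure μ]
    {f : Ω → E} (hf : StronglyMeasurable f) : Integrable f μ :=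
  let ⟨C, hC⟩ := Finite.exists_le (‖f ·‖)
  .of_bound hf.aestronglyMeasurable C (.of_forall hC)

lemma ae_eq_const_of_condExp_mul_eq_const {Ω : Type*} {m mΩ : MeasurableSpace Ω}
    {μ : Measure Ω} {G M : Ω → ℝ} {c : ℝ} (hG : StronglyMeasurable[m] G)
    (hM : Integrable M μ) (hGM : Integrable (G * M) μ) (hM1 : μ[M | m] =ᵐ[μ] 1)
    (hGMc : μ[G * M | m] =ᵐ[μ] fun _ => c) : G =ᵐ[μ] fun _ => c := by
  have hpull : μ[G * M | m] =ᵐ[μ] G * μ[M | m] :=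
    condExp_mul_of_stronglyMeasurable_left hG hGM hM
  filter_upwards [hpull, hM1, hGMc] with ω hpull hM1 hGMc
  simpa [hM1, hGMc] using hpull.symm

/-- No deflator on the full horizon: if `G` is a non-constant `ℱ T`-measurable random
variable, there is no positive `(P, 𝒢)`-martingale `M` on `{0,...,T}` with `M 0 = 1`
such that `X·M` is a `(P, 𝒢)`-martingale for every `(P, ℱ)`-martingale `X`. -/
theorem stmt4 {Ω : Type*} [Fintype Ω] {mΩ : MeasurableSpace Ω}
    (μ : Measure Ω) [IsProbabilityMeasure μ]
    (T : ℕ) (ℱ 𝒢 : Filtration ℕ mΩ) (hF0 : ℱ 0 = ⊥)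
    (G : Ω → ℝ) (hG : StronglyMeasurable[ℱ T] G)
    (hGnc : ¬ ∃ c : ℝ, G =ᵐ[μ] fun _ => c)
    (h𝒢 : ∀ s, (𝒢 s : MeasurableSpace Ω) =
      (ℱ s : MeasurableSpace Ω) ⊔ MeasurableSpace.comap G inferInstance) :
    ¬ ∃ M : ℕ → Ω → ℝ,
      (∀ s ≤ T, ∀ ω, 0 < M s ω) ∧ (∀ ω, M 0 ω = 1) ∧
      ((∀ s ≤ T, StronglyMeasurable[𝒢 s] (M s)) ∧
        ∀ s t, s ≤ t → t ≤ T → μ[M t | 𝒢 s] =ᵐ[μ] M s) ∧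
      (∀ X : ℕ → Ω → ℝ,
        ((∀ s ≤ T, StronglyMeasurable[ℱ s] (X s)) ∧
          ∀ s t, s ≤ t → t ≤ T → μ[X t | ℱ s] =ᵐ[μ] X s) →
        ((∀ s ≤ T, StronglyMeasurable[𝒢 s] (fun ω => X s ω * M s ω)) ∧
          ∀ s t, s ≤ t → t ≤ T →
            μ[(fun ω => X t ω * M t ω) | 𝒢 s] =ᵐ[μ] fun ω => X s ω * M s ω)) := by
  rintro ⟨M, -, hM0, ⟨hMadapt, hMmart⟩, hdefl⟩
  have hM0 : M 0 = 1 := funext hM0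
  have hMT : StronglyMeasurable (M T) := (hMadapt T le_rfl).mono (𝒢.le T)
  have hGT : StronglyMeasurable G := hG.mono (ℱ.le T)
  have hG𝒢 : StronglyMeasurable[𝒢 0] G :=
    ((Measurable.of_comap_le le_rfl).mono (h𝒢 0 ▸ le_sup_right) le_rfl).stronglyMeasurable
  obtain ⟨hXadapt, hXmart⟩ := martingale_condExp G ℱ μ
  have hXT : μ[G | ℱ T] = G :=
    condExp_of_stronglyMeasurable (ℱ.le T) hG hGT.integrable_of_finite
  have hX0 : μ[G | ℱ 0] = fun _ => ∫ ω, G ω ∂μ := by rw [hF0, condExp_bot]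
  have hdeflG := (hdefl (fun t => μ[G | ℱ t])
    ⟨fun s _ => hXadapt s, fun s t hst _ => hXmart s t hst⟩).2 0 T T.zero_le le_rfl
  refine hGnc ⟨∫ ω, G ω ∂μ, ae_eq_const_of_condExp_mul_eq_const hG𝒢
    hMT.integrable_of_finite (hGT.mul hMT).integrable_of_finite
    (hM0 ▸ hMmart 0 T T.zero_le le_rfl) ?_⟩
  simp only [hXT, hX0, hM0, Pi.one_apply, mul_one] at hdeflG
  exact hdeflG
end
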